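/- arXiv:2208.12252 — 2 statements merged into one kernel-verified Lean document; each statement's English description precedes it below -/
import Mathlib

section
/- Let M and N be real symmetric n×n matrices, and suppose there exists a vector u₀ ∈ ℝⁿ with u₀ᵀ M u₀ > 0. Then the implication (for all u ∈ ℝⁿ, uᵀ M u ≥ 0 implies uᵀ N u ≥ 0) holds if and only if there exists a scalar λ ≥ 0 such that the matrix N − λM is positive semidefinite. -/
open Matrix

/-- Key 2-dimensional scalar lemma: if `a s² + 2b st + c t²` is indefinite
(negative at `(1,0)`, positive at `(0,1)`) and the second form is nonnegative
wherever the first is, then `a c' ≤ a' c`. -/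
private lemma s_lemma_aux (a b c a' b' c' : ℝ) (ha : a < 0) (hc : 0 < c)
    (h : ∀ s t : ℝ, 0 ≤ a * s ^ 2 + 2 * b * (s * t) + c * t ^ 2 →
      0 ≤ a' * s ^ 2 + 2 * b' * (s * t) + c' * t ^ 2) :
    a * c' ≤ a' * c := by
  have hd2 : (0 : ℝ) < b ^ 2 - a * c := by nlinarith
  set d := Real.sqrt (b ^ 2 - a * c) with hdd
  have hd : d ^ 2 = b ^ 2 - a * c := Real.sq_sqrt hd2.le
  have hdpos : 0 < d := Real.sqrt_pos.mpr hd2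
  have hbd : b < d := by nlinarith
  have hbd' : -d < b := by nlinarith
  have hA : 0 ≤ a' * (d - b) ^ 2 + 2 * b' * ((d - b) * a) + c' * a ^ 2 := by
    apply h (d - b) a
    nlinarith [hd]
  have hB : 0 ≤ a' * (-(b + d)) ^ 2 + 2 * b' * (-(b + d) * a) + c' * a ^ 2 := by
    apply h (-(b + d)) a
    nlinarith [hd]
  have e : (b + d) * (a' * (d - b) ^ 2 + 2 * b' * ((d - b) * a) + c' * a ^ 2)
       + (d - b) * (a' * (-(b + d)) ^ 2 + 2 * b' * (-(b + d) * a) + c' * a ^ 2)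
       = 2 * d * a * (c' * a - a' * c) := by
    linear_combination (2 * a' * d) * hd
  have hsum : 0 ≤ 2 * d * a * (c' * a - a' * c) := by
    rw [← e]
    have := mul_nonneg (by linarith : (0:ℝ) ≤ b + d) hA
    have := mul_nonneg (by linarith : (0:ℝ) ≤ d - b) hB
    linarith
  have h2da : 2 * d * a < 0 := by nlinarith
  nlinarith [hsum, h2da]

private lemma bilin_expand {n : ℕ} (A : Matrix (Fin n) (Fin n) ℝ) (hA : A.IsSymm)
    (x y : Fin n → ℝ) (s t : ℝ) :
    dotProduct (s • x + t • y) (A.mulVec (s • x + t • y)) =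
      dotProduct x (A.mulVec x) * s ^ 2 +
        2 * dotProduct x (A.mulVec y) * (s * t) +
        dotProduct y (A.mulVec y) * t ^ 2 := by
  have hsw : dotProduct y (A.mulVec x) = dotProduct x (A.mulVec y) := by
    rw [dotProduct_mulVec, ← mulVec_transpose, hA.eq, dotProduct_comm]
  simp only [mulVec_add, mulVec_smul, dotProduct_add, add_dotProduct,
    dotProduct_smul, smul_dotProduct, smul_eq_mul, hsw]
  ring

/-- The lossless S-lemma (S-procedure) with a single quadratic constraint, under the
Slater-type condition that the constraint quadratic form is strictly positive somewhere. -/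
theorem s_lemma (n : ℕ) (M N : Matrix (Fin n) (Fin n) ℝ)
    (hM : M.IsSymm) (hN : N.IsSymm)
    (u₀ : Fin n → ℝ) (hu₀ : 0 < dotProduct u₀ (M.mulVec u₀)) :
    (∀ u : Fin n → ℝ, 0 ≤ dotProduct u (M.mulVec u) →
        0 ≤ dotProduct u (N.mulVec u)) ↔
      ∃ lam : ℝ, 0 ≤ lam ∧ (N - lam • M).PosSemidef := by
  constructor
  · intro h
    -- the set of ratios over the region where the constraint form is positive
    set S : Set ℝ := {r | ∃ x : Fin n → ℝ, 0 < dotProduct x (M.mulVec x) ∧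
      r = dotProduct x (N.mulVec x) / dotProduct x (M.mulVec x)} with hS
    have hne : S.Nonempty := ⟨_, u₀, hu₀, rfl⟩
    have hlb : ∀ r ∈ S, (0 : ℝ) ≤ r := by
      rintro r ⟨x, hx, rfl⟩
      exact div_nonneg (h x hx.le) hx.le
    have hbdd : BddBelow S := ⟨0, fun r hr => hlb r hr⟩
    set lam := sInf S with hlam
    have hlam0 : 0 ≤ lam := le_csInf hne hlb
    -- the central estimate
    have qf : ∀ x : Fin n → ℝ,
        lam * dotProduct x (M.mulVec x) ≤ dotProduct x (N.mulVec x) := by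
      intro x
      rcases lt_trichotomy (dotProduct x (M.mulVec x)) 0 with hx | hx | hx
      · -- constraint form negative at x : use the 2D lemma against every y in S
        have hrle : dotProduct x (N.mulVec x) / dotProduct x (M.mulVec x) ≤ lam := by
          apply le_csInf hne
          rintro r ⟨y, hy, rfl⟩
          have key := s_lemma_aux (dotProduct x (M.mulVec x)) (dotProduct x (M.mulVec y))
            (dotProduct y (M.mulVec y)) (dotProduct x (N.mulVec x))
            (dotProduct x (N.mulVec y)) (dotProduct y (N.mulVec y)) hx hy ?_
          · -- translate to the ratio inequality
            have hxne : dotProduct x (M.mulVec x) ≠ 0 := ne_of_lt hx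
            have hyne : dotProduct y (M.mulVec y) ≠ 0 := ne_of_gt hy
            have hdiff : dotProduct x (N.mulVec x) / dotProduct x (M.mulVec x)
                - dotProduct y (N.mulVec y) / dotProduct y (M.mulVec y)
                = (dotProduct x (N.mulVec x) * dotProduct y (M.mulVec y)
                    - dotProduct y (N.mulVec y) * dotProduct x (M.mulVec x))
                  / (dotProduct x (M.mulVec x) * dotProduct y (M.mulVec y)) := by
              field_simp
            have hq : (dotProduct x (N.mulVec x) * dotProduct y (M.mulVec y)
                    - dotProduct y (N.mulVec y) * dotProduct x (M.mulVec x))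
                  / (dotProduct x (M.mulVec x) * dotProduct y (M.mulVec y)) ≤ 0 :=
              div_nonpos_iff.mpr (Or.inl ⟨by linarith [key],
                (mul_neg_of_neg_of_pos hx hy).le⟩)
            rw [← hdiff] at hq
            linarith
          · intro s t hst
            have e1 := bilin_expand M hM x y s t
            have e2 := bilin_expand N hN x y s t
            have := h (s • x + t • y) (by rw [e1]; linarith [hst])
            rw [e2] at this
            linarith
        have hxle : dotProduct x (M.mulVec x) ≤ 0 := hx.le
        have := mul_le_mul_of_nonpos_right hrle hxle
        rwa [div_mul_cancel₀ _ (ne_of_lt hx)] at this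
      · rw [hx, mul_zero]
        exact h x (le_of_eq hx.symm)
      · have hmem : dotProduct x (N.mulVec x) / dotProduct x (M.mulVec x) ∈ S :=
          ⟨x, hx, rfl⟩
        have := csInf_le hbdd hmem
        rw [le_div_iff₀ hx] at this
        exact this
    refine ⟨lam, hlam0, ?_⟩
    refine Matrix.PosSemidef.of_dotProduct_mulVec_nonneg ?_ ?_
    · exact hN.sub (hM.smul lam)
    · intro x
      have := qf x
      simp only [sub_mulVec, smul_mulVec, dotProduct_sub, dotProduct_smul,
        smul_eq_mul, star_trivial]
      linarith
  · rintro ⟨lam, hlam, hpsd⟩ u hu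
    have h2 := hpsd.dotProduct_mulVec_nonneg u
    simp only [sub_mulVec, smul_mulVec, dotProduct_sub, dotProduct_smul,
      smul_eq_mul, star_trivial] at h2
    nlinarith [mul_nonneg hlam hu]
end

section
/- Let H̃ be a real symmetric p×p matrix, C̃ a real p×m matrix, d̃ ∈ ℝᵐ, f̃ ∈ ℝᵖ, g̃ ∈ ℝ. A vector u ∈ ℝᵐ satisfies the semi-infinite constraint ((zᵀC̃ + d̃ᵀ)u ≤ zᵀH̃z + f̃ᵀz + g̃ for all z ∈ ℝᵖ with ‖z‖₂ ≤ 1) if and only if there exist λ ∈ ℝ and t ∈ ℝ with t = ‖u‖₂² such that λ ≥ 0, the matrix [[H̃ + λI, (1/2)(f̃ − C̃u)], [(1/2)(f̃ − C̃u)ᵀ, g̃ − d̃ᵀu − λ]] is positive semidefinite, and the matrix [[Iₘ, u], [uᵀ, t]] is positive semidefinite. Consequently the semi-infinite robust QP and the SDP with objective t have the same optimal value and the same optimizers u. -/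
open Matrix

lemma dot_symm {p : ℕ} (H : Matrix (Fin p) (Fin p) ℝ) (hH : H.IsSymm) (x y : Fin p → ℝ) :
    x ⬝ᵥ H.mulVec y = y ⬝ᵥ H.mulVec x := by
  rw [Matrix.dotProduct_mulVec, ← Matrix.mulVec_transpose, hH.eq, dotProduct_comm]

lemma eps_nonneg (P X : ℝ) (h : ∀ ε : ℝ, 0 < ε → ε ≤ 1 → 0 ≤ P + ε * X) : 0 ≤ P := by
  by_contra hP
  push_neg at hP
  rcases le_or_gt X 0 with hX | hX
  · have := h 1 one_pos le_rfl; linarith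
  · have hε : 0 < min 1 (-P / (2 * X)) := by
      apply lt_min one_pos
      exact div_pos (by linarith) (by linarith)
    have h2 := h _ hε (min_le_left _ _)
    have h3 : min 1 (-P / (2 * X)) * X ≤ (-P / (2 * X)) * X :=
      mul_le_mul_of_nonneg_right (min_le_right _ _) hX.le
    have h4 : (-P / (2 * X)) * X = -P / 2 := by field_simp
    linarith

lemma dot_self_nonneg' {p : ℕ} (z : Fin p → ℝ) : 0 ≤ z ⬝ᵥ z :=
  Finset.sum_nonneg fun _ _ => mul_self_nonneg _

lemma dotH_expand {p : ℕ} (H : Matrix (Fin p) (Fin p) ℝ) (hH : H.IsSymm) (x y : Fin p → ℝ)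
    (t : ℝ) : (x + t • y) ⬝ᵥ H.mulVec (x + t • y)
      = x ⬝ᵥ H.mulVec x + 2 * t * (y ⬝ᵥ H.mulVec x) + t ^ 2 * (y ⬝ᵥ H.mulVec y) := by
  simp only [Matrix.mulVec_add, Matrix.mulVec_smul, dotProduct_add, add_dotProduct,
    dotProduct_smul, smul_dotProduct, smul_eq_mul, dot_symm H hH x y]
  ring

lemma dot_expand {p : ℕ} (x y : Fin p → ℝ) (t : ℝ) :
    (x + t • y) ⬝ᵥ (x + t • y) = x ⬝ᵥ x + 2 * t * (y ⬝ᵥ x) + t ^ 2 * (y ⬝ᵥ y) := by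
  simp only [dotProduct_add, add_dotProduct, dotProduct_smul,
    smul_dotProduct, smul_eq_mul, dotProduct_comm x y]
  ring

lemma dotb_expand {p : ℕ} (b x y : Fin p → ℝ) (t : ℝ) :
    b ⬝ᵥ (x + t • y) = b ⬝ᵥ x + t * (b ⬝ᵥ y) := by
  simp only [dotProduct_add, dotProduct_smul, smul_eq_mul]

lemma dotH_smul {p : ℕ} (H : Matrix (Fin p) (Fin p) ℝ) (x : Fin p → ℝ) (r : ℝ) :
    (r • x) ⬝ᵥ H.mulVec (r • x) = r ^ 2 * (x ⬝ᵥ H.mulVec x) := by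
  simp only [Matrix.mulVec_smul, dotProduct_smul, smul_dotProduct, smul_eq_mul]
  ring

lemma dot_gv {p : ℕ} (H : Matrix (Fin p) (Fin p) ℝ) (w₀ b : Fin p → ℝ) (lam : ℝ)
    (v : Fin p → ℝ) :
    v ⬝ᵥ ((2:ℝ) • H.mulVec w₀ + b + (2 * lam) • w₀)
      = 2 * (v ⬝ᵥ H.mulVec w₀) + b ⬝ᵥ v + 2 * lam * (v ⬝ᵥ w₀) := by
  simp only [dotProduct_add, dotProduct_smul, smul_eq_mul,
    dotProduct_comm v b]
  try ring

lemma wrapup {p : ℕ} (H : Matrix (Fin p) (Fin p) ℝ) (hH : H.IsSymm) (b : Fin p → ℝ) (c : ℝ)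
    (lam : ℝ) (w₀ : Fin p → ℝ)
    (hv : (2:ℝ) • H.mulVec w₀ + b + (2 * lam) • w₀ = 0)
    (hA : ∀ dv : Fin p → ℝ, 0 ≤ dv ⬝ᵥ H.mulVec dv + lam * (dv ⬝ᵥ dv))
    (hzero : lam * (w₀ ⬝ᵥ w₀ - 1) = 0)
    (hq0 : 0 ≤ w₀ ⬝ᵥ H.mulVec w₀ + b ⬝ᵥ w₀ + c) :
    ∀ w : Fin p → ℝ, 0 ≤ w ⬝ᵥ H.mulVec w + b ⬝ᵥ w + c + lam * (w ⬝ᵥ w - 1) := by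
  intro w
  have hv' : ∀ v : Fin p → ℝ,
      2 * (v ⬝ᵥ H.mulVec w₀) + b ⬝ᵥ v + 2 * lam * (v ⬝ᵥ w₀) = 0 := by
    intro v
    rw [← dot_gv H w₀ b lam v, hv, dotProduct_zero]
  have key : ∀ v : Fin p → ℝ,
      (w₀ + (1:ℝ) • v) ⬝ᵥ H.mulVec (w₀ + (1:ℝ) • v) + b ⬝ᵥ (w₀ + (1:ℝ) • v) + c
        + lam * ((w₀ + (1:ℝ) • v) ⬝ᵥ (w₀ + (1:ℝ) • v) - 1)
      = (v ⬝ᵥ H.mulVec v + lam * (v ⬝ᵥ v))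
        + (w₀ ⬝ᵥ H.mulVec w₀ + b ⬝ᵥ w₀ + c) + lam * (w₀ ⬝ᵥ w₀ - 1) := by
    intro v
    rw [dotH_expand H hH, dot_expand, dotb_expand]
    linear_combination hv' v
  have hw : w = w₀ + (1:ℝ) • (w - w₀) := by simp
  rw [hw]
  have := key (w - w₀)
  rw [this]
  have := hA (w - w₀)
  linarith [hzero]

lemma norm_sq_dot {p : ℕ} (z : EuclideanSpace ℝ (Fin p)) : ‖z‖ ^ 2 = z ⬝ᵥ z := by
  rw [EuclideanSpace.norm_eq, Real.sq_sqrt (by positivity)]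
  simp [dotProduct, Real.norm_eq_abs, sq_abs, pow_two]

lemma norm_le_iff_dot {p : ℕ} (z : EuclideanSpace ℝ (Fin p)) : ‖z‖ ≤ 1 ↔ z ⬝ᵥ z ≤ 1 := by
  rw [← norm_sq_dot]
  constructor <;> intro h <;> nlinarith [norm_nonneg z]

lemma ball_min {p : ℕ} (q : (Fin p → ℝ) → ℝ)
    (hq : Continuous fun z : EuclideanSpace ℝ (Fin p) => q z) :
    ∃ w₀ : Fin p → ℝ, w₀ ⬝ᵥ w₀ ≤ 1 ∧ ∀ x : Fin p → ℝ, x ⬝ᵥ x ≤ 1 → q w₀ ≤ q x := by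
  obtain ⟨w₀, hw₀K, hmin⟩ := (isCompact_closedBall (0 : EuclideanSpace ℝ (Fin p)) 1).exists_isMinOn
    ⟨0, by simp⟩ hq.continuousOn
  refine ⟨w₀, ?_, fun x hx => ?_⟩
  · rw [← norm_le_iff_dot]
    simpa [mem_closedBall_zero_iff] using hw₀K
  · exact hmin (by
      simp only [Metric.mem_closedBall, dist_zero_right]
      exact (norm_le_iff_dot ((WithLp.equiv 2 (Fin p → ℝ)).symm x)).2 hx)

lemma dot_smul' {p : ℕ} (x : Fin p → ℝ) (r : ℝ) :
    (r • x) ⬝ᵥ (r • x) = r ^ 2 * (x ⬝ᵥ x) := by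
  simp only [dotProduct_smul, smul_dotProduct, smul_eq_mul]
  ring

lemma dotb_smul {p : ℕ} (b x : Fin p → ℝ) (r : ℝ) :
    b ⬝ᵥ (r • x) = r * (b ⬝ᵥ x) := by
  simp only [dotProduct_smul, smul_eq_mul]


set_option maxHeartbeats 1000000 in
lemma sproc (p : ℕ) (H : Matrix (Fin p) (Fin p) ℝ) (hH : H.IsSymm) (b : Fin p → ℝ) (c : ℝ)
    (hyp : ∀ z : EuclideanSpace ℝ (Fin p), ‖z‖ ≤ 1 →
      0 ≤ z ⬝ᵥ H.mulVec z + b ⬝ᵥ z + c) :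
    ∃ lam : ℝ, 0 ≤ lam ∧
      (∀ z : Fin p → ℝ, 0 ≤ z ⬝ᵥ H.mulVec z + lam * (z ⬝ᵥ z)) ∧
      (∀ w : Fin p → ℝ, 0 ≤ w ⬝ᵥ H.mulVec w + b ⬝ᵥ w + c + lam * (w ⬝ᵥ w - 1)) := by
  classical
  set q : (Fin p → ℝ) → ℝ := fun w => w ⬝ᵥ H.mulVec w + b ⬝ᵥ w + c with hqdef
  have hqc : Continuous fun z : EuclideanSpace ℝ (Fin p) => q z := by
    have hap : ∀ i, Continuous (fun z : EuclideanSpace ℝ (Fin p) => z i) :=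
      fun i => (EuclideanSpace.proj i).continuous
    simp only [hqdef, dotProduct, Matrix.mulVec]
    fun_prop
  obtain ⟨w₀, hw₀, hmin⟩ := ball_min q hqc
  have hyp' : ∀ x : Fin p → ℝ, x ⬝ᵥ x ≤ 1 → 0 ≤ q x := by
    intro x hx
    exact hyp ((WithLp.equiv 2 (Fin p → ℝ)).symm x)
      ((norm_le_iff_dot ((WithLp.equiv 2 (Fin p → ℝ)).symm x)).2 hx)
  have hq0 : 0 ≤ q w₀ := hyp' w₀ hw₀
  rcases lt_or_eq_of_le hw₀ with hlt | hbd
  · -- interior case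
    -- first order and second order conditions along lines
    have key1 : ∀ d : Fin p → ℝ, ∃ ε : ℝ, 0 < ε ∧ ε ≤ 1 ∧ ∀ t : ℝ, |t| ≤ ε →
        0 ≤ t * (2 * (d ⬝ᵥ H.mulVec w₀) + b ⬝ᵥ d) + t ^ 2 * (d ⬝ᵥ H.mulVec d) := by
      intro d
      set D : ℝ := 2 * |d ⬝ᵥ w₀| + d ⬝ᵥ d + 1 with hD
      have hDpos : 0 < D := by
        have := dot_self_nonneg' d
        have := abs_nonneg (d ⬝ᵥ w₀)
        linarith
      refine ⟨min 1 ((1 - w₀ ⬝ᵥ w₀) / D), lt_min one_pos (div_pos (by linarith) hDpos),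
        min_le_left _ _, fun t ht => ?_⟩
      have ht1 : |t| ≤ 1 := le_trans ht (min_le_left _ _)
      have ht2 : |t| ≤ (1 - w₀ ⬝ᵥ w₀) / D := le_trans ht (min_le_right _ _)
      have hmem : (w₀ + t • d) ⬝ᵥ (w₀ + t • d) ≤ 1 := by
        rw [dot_expand]
        have habs : 2 * t * (d ⬝ᵥ w₀) + t ^ 2 * (d ⬝ᵥ d) ≤ |t| * D := by
          have h1 : 2 * t * (d ⬝ᵥ w₀) ≤ 2 * |t| * |d ⬝ᵥ w₀| := by
            have := abs_mul t (d ⬝ᵥ w₀)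
            have := le_abs_self (t * (d ⬝ᵥ w₀))
            nlinarith [abs_nonneg t, abs_nonneg (d ⬝ᵥ w₀)]
          have h2 : t ^ 2 * (d ⬝ᵥ d) ≤ |t| * (d ⬝ᵥ d) := by
            have h3 : t ^ 2 = |t| * |t| := by rw [← sq_abs]; ring
            have h4 : |t| * |t| ≤ |t| := by nlinarith [abs_nonneg t]
            rw [h3]
            exact mul_le_mul_of_nonneg_right h4 (dot_self_nonneg' d)
          have := abs_nonneg t
          rw [hD]; nlinarith
        have : |t| * D ≤ 1 - w₀ ⬝ᵥ w₀ := by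
          exact (le_div_iff₀ hDpos).mp ht2
        linarith
      have := hmin _ hmem
      have hexp := dotH_expand H hH w₀ d t
      have hexpb := dotb_expand b w₀ d t
      simp only [hqdef] at this ⊢
      rw [hexp, hexpb] at this
      nlinarith [this]
    have hγ : ∀ d : Fin p → ℝ, 0 ≤ d ⬝ᵥ H.mulVec d := by
      intro d
      obtain ⟨ε, hε, hε1, hk⟩ := key1 d
      have h1 := hk ε (by rw [abs_of_pos hε])
      have h2 := hk (-ε) (by rw [abs_neg, abs_of_pos hε])
      nlinarith [mul_pos hε hε]
    have hα : ∀ d : Fin p → ℝ, 2 * (d ⬝ᵥ H.mulVec w₀) + b ⬝ᵥ d = 0 := by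
      intro d
      obtain ⟨ε, hε, hε1, hk⟩ := key1 d
      have h1 : 0 ≤ 2 * (d ⬝ᵥ H.mulVec w₀) + b ⬝ᵥ d := by
        apply eps_nonneg _ (ε * (d ⬝ᵥ H.mulVec d))
        intro s hs hs1
        have hsε : 0 < s * ε := mul_pos hs hε
        have := hk (s * ε) (by rw [abs_of_pos hsε]; nlinarith)
        nlinarith [this]
      have h2 : 0 ≤ -(2 * (d ⬝ᵥ H.mulVec w₀) + b ⬝ᵥ d) := by
        apply eps_nonneg _ (ε * (d ⬝ᵥ H.mulVec d))
        intro s hs hs1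
        have hsε : 0 < s * ε := mul_pos hs hε
        have := hk (-(s * ε)) (by rw [abs_neg, abs_of_pos hsε]; nlinarith)
        nlinarith [this]
      linarith
    have hgv0 : (2:ℝ) • H.mulVec w₀ + b + (2 * (0:ℝ)) • w₀ = 0 := by
      rw [← dotProduct_self_eq_zero]
      rw [dot_gv]
      have := hα ((2:ℝ) • H.mulVec w₀ + b + (2 * (0:ℝ)) • w₀)
      linarith
    refine ⟨0, le_rfl, fun z => by simpa using hγ z, ?_⟩
    have := wrapup H hH b c 0 w₀ hgv0 (fun dv => by simpa using hγ dv) (by ring) hq0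
    simpa using this
  · -- boundary case: w₀ ⬝ᵥ w₀ = 1
    have hbd : w₀ ⬝ᵥ w₀ = 1 := hbd
    set a := w₀ ⬝ᵥ H.mulVec w₀ with ha
    set β := b ⬝ᵥ w₀ with hβ
    set lam := -(2 * a + β) / 2 with hlamdef
    have hlam0 : 0 ≤ lam := by
      have key : 0 ≤ -(2 * a + β) := by
        apply eps_nonneg _ a
        intro ε hε hε1
        have hr : ((1 - ε) • w₀) ⬝ᵥ ((1 - ε) • w₀) ≤ 1 := by
          rw [dot_smul', hbd]; nlinarith
        have h := hmin _ hr
        simp only [hqdef] at h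
        rw [dotH_smul, dotb_smul, ← ha, ← hβ] at h
        nlinarith [h]
      rw [hlamdef]; linarith
    set gv : Fin p → ℝ := (2:ℝ) • H.mulVec w₀ + b + (2 * lam) • w₀ with hgvdef
    have hgvw : gv ⬝ᵥ w₀ = 0 := by
      rw [dotProduct_comm, dot_gv, hbd, ← ha, ← hβ, hlamdef]
      ring
    set μ := gv ⬝ᵥ H.mulVec w₀ with hμ
    set γ := gv ⬝ᵥ H.mulVec gv with hγ
    set ν := b ⬝ᵥ gv with hν
    set δ := gv ⬝ᵥ gv with hδ
    have hδ0 : 0 ≤ δ := dot_self_nonneg' gv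
    have hpos : ∀ t : ℝ, (0:ℝ) < 1 + t ^ 2 * δ := by
      intro t; nlinarith [sq_nonneg t, mul_nonneg (sq_nonneg t) hδ0]
    set ψ : ℝ → ℝ := fun t =>
      (1 + t ^ 2 * δ)⁻¹ * (a + 2 * t * μ + t ^ 2 * γ)
        + (Real.sqrt (1 + t ^ 2 * δ))⁻¹ * (β + t * ν) + c with hψdef
    have hψ_ge : ∀ t : ℝ, q w₀ ≤ ψ t := by
      intro t
      set s := Real.sqrt (1 + t ^ 2 * δ) with hs
      have hs2 : s ^ 2 = 1 + t ^ 2 * δ := Real.sq_sqrt (hpos t).le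
      have hspos : 0 < s := Real.sqrt_pos.mpr (hpos t)
      have hyy : (w₀ + t • gv) ⬝ᵥ (w₀ + t • gv) = 1 + t ^ 2 * δ := by
        rw [dot_expand, hbd, hgvw]; ring
      have hmem : (s⁻¹ • (w₀ + t • gv)) ⬝ᵥ (s⁻¹ • (w₀ + t • gv)) ≤ 1 := by
        rw [dot_smul', hyy, ← hs2]
        rw [inv_pow]
        rw [inv_mul_cancel₀ (by positivity)]
      have h := hmin _ hmem
      simp only [hqdef] at h
      rw [dotH_smul, dotb_smul, dotH_expand H hH, dotb_expand] at h
      have hinv : (s⁻¹) ^ 2 = (1 + t ^ 2 * δ)⁻¹ := by rw [inv_pow, hs2]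
      rw [hinv, ← ha, ← hβ, ← hμ, ← hγ, ← hν] at h
      have hψt : ψ t = (1 + t ^ 2 * δ)⁻¹ * (a + 2 * t * μ + t ^ 2 * γ)
          + s⁻¹ * (β + t * ν) + c := by rw [hψdef]
      rw [hψt]
      simp only [hqdef]
      rw [← ha, ← hβ]
      linarith [h]
    have hψ0 : ψ 0 = q w₀ := by
      simp only [hψdef, hqdef]
      rw [← ha, ← hβ]
      norm_num [Real.sqrt_one]
    have hloc : IsLocalMin ψ 0 := Filter.Eventually.of_forall fun t => by
      rw [hψ0]; exact hψ_ge t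
    have h₁ : HasDerivAt (fun t : ℝ => 1 + t ^ 2 * δ) 0 0 := by
      have h := (hasDerivAt_pow 2 (0:ℝ)).mul_const δ
      simpa using h.const_add 1
    have h₂ : HasDerivAt (fun t : ℝ => (1 + t ^ 2 * δ)⁻¹) 0 0 := by
      have := h₁.inv (by norm_num)
      exact this.congr_deriv (by simp)
    have h₃ : HasDerivAt (fun t : ℝ => Real.sqrt (1 + t ^ 2 * δ)) 0 0 := by
      have houter : HasDerivAt (fun x : ℝ => Real.sqrt x)
          (1 / (2 * Real.sqrt (1 + (0:ℝ) ^ 2 * δ))) (1 + (0:ℝ) ^ 2 * δ) :=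
        Real.hasDerivAt_sqrt (by norm_num)
      have hc := HasDerivAt.comp (0:ℝ) houter h₁
      exact hc.congr_deriv (by simp)
    have h₄ : HasDerivAt (fun t : ℝ => (Real.sqrt (1 + t ^ 2 * δ))⁻¹) 0 0 := by
      have := h₃.inv (by norm_num [Real.sqrt_one])
      exact this.congr_deriv (by simp)
    have h₅ : HasDerivAt (fun t : ℝ => a + 2 * t * μ + t ^ 2 * γ) (2 * μ) 0 := by
      have h5a : HasDerivAt (fun t : ℝ => 2 * t * μ) (2 * μ) 0 := by
        have := ((hasDerivAt_id (0:ℝ)).const_mul 2).mul_const μ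
        simpa using this
      have h5b : HasDerivAt (fun t : ℝ => t ^ 2 * γ) 0 0 := by
        simpa using (hasDerivAt_pow 2 (0:ℝ)).mul_const γ
      exact ((h5a.const_add a).add h5b).congr_deriv (by simp)
    have h₆ : HasDerivAt (fun t : ℝ => β + t * ν) ν 0 := by
      have := (hasDerivAt_id (0:ℝ)).mul_const ν
      simpa using this.const_add β
    have hd : HasDerivAt ψ (2 * μ + ν) 0 := by
      have := ((h₂.mul h₅).add (h₄.mul h₆)).add_const c
      norm_num [Real.sqrt_one] at this
      simpa [hψdef] using this
    have hcrit : 2 * μ + ν = 0 := hloc.hasDerivAt_eq_zero hd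
    have hgv0 : gv = 0 := by
      rw [← dotProduct_self_eq_zero]
      have := dot_gv H w₀ b lam gv
      rw [← hgvdef] at this
      rw [this, hgvw]
      rw [hμ, hν] at hcrit
      linarith
    have hA : ∀ dv : Fin p → ℝ, 0 ≤ dv ⬝ᵥ H.mulVec dv + lam * (dv ⬝ᵥ dv) := by
      have hlincomb : ∀ dv : Fin p → ℝ,
          2 * (dv ⬝ᵥ H.mulVec w₀) + b ⬝ᵥ dv + 2 * lam * (dv ⬝ᵥ w₀) = 0 := by
        intro dv
        rw [← dot_gv H w₀ b lam dv, ← hgvdef, hgv0, dotProduct_zero]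
      have hA1 : ∀ dv : Fin p → ℝ, dv ⬝ᵥ w₀ ≠ 0 →
          0 ≤ dv ⬝ᵥ H.mulVec dv + lam * (dv ⬝ᵥ dv) := by
        intro dv hdvw
        have hdd : 0 < dv ⬝ᵥ dv := by
          rcases (dot_self_nonneg' dv).lt_or_eq with h | h
          · exact h
          · exfalso
            apply hdvw
            have : dv = 0 := by rwa [eq_comm, dotProduct_self_eq_zero] at h
            rw [this, zero_dotProduct]
        set k := -2 * (dv ⬝ᵥ w₀) / (dv ⬝ᵥ dv) with hk
        have hknz : k ≠ 0 := by
          rw [hk]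
          exact div_ne_zero (by simpa using hdvw) hdd.ne'
        have hkk : 2 * k * (dv ⬝ᵥ w₀) + k ^ 2 * (dv ⬝ᵥ dv) = 0 := by
          rw [hk]; field_simp; ring
        have hmem : (w₀ + k • dv) ⬝ᵥ (w₀ + k • dv) ≤ 1 := by
          rw [dot_expand, hbd]; linarith
        have h := hmin _ hmem
        simp only [hqdef] at h
        rw [dotH_expand H hH, dotb_expand] at h
        have hl := hlincomb dv
        have hk2 : 0 < k ^ 2 := pow_two_pos_of_ne_zero hknz
        rw [← ha, ← hβ] at h
        have hfin : k ^ 2 * (dv ⬝ᵥ H.mulVec dv + lam * (dv ⬝ᵥ dv))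
            = (a + 2 * k * (dv ⬝ᵥ H.mulVec w₀) + k ^ 2 * (dv ⬝ᵥ H.mulVec dv)
                + (β + k * (b ⬝ᵥ dv)) + c) - (a + β + c) := by
          linear_combination (-k) * hl + lam * hkk
        have hQ : 0 ≤ k ^ 2 * (dv ⬝ᵥ H.mulVec dv + lam * (dv ⬝ᵥ dv)) := by
          rw [hfin]; linarith [h]
        nlinarith [hQ, hk2]
      intro dv
      by_cases hdvw : dv ⬝ᵥ w₀ = 0
      · apply eps_nonneg _ (|2 * (w₀ ⬝ᵥ H.mulVec dv)| + |a + lam|)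
        intro ε hε hε1
        have hne : (dv + ε • w₀) ⬝ᵥ w₀ ≠ 0 := by
          rw [add_dotProduct, smul_dotProduct, hdvw, hbd]
          simpa using hε.ne'
        have h := hA1 _ hne
        rw [dotH_expand H hH, dot_expand, dotProduct_comm w₀ dv,
          hdvw, hbd] at h
        have e1 : ε * (2 * (w₀ ⬝ᵥ H.mulVec dv)) ≤ ε * |2 * (w₀ ⬝ᵥ H.mulVec dv)| :=
          mul_le_mul_of_nonneg_left (le_abs_self _) hε.le
        have e2 : ε ^ 2 * (a + lam) ≤ ε ^ 2 * |a + lam| :=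
          mul_le_mul_of_nonneg_left (le_abs_self _) (sq_nonneg _)
        have e3 : ε ^ 2 * |a + lam| ≤ ε * |a + lam| := by
          nlinarith [abs_nonneg (a + lam),
            mul_nonneg (mul_nonneg hε.le (sub_nonneg.mpr hε1)) (abs_nonneg (a + lam))]
        rw [← ha] at h
        linarith [h, e1, e2, e3]
      · exact hA1 dv hdvw
    refine ⟨lam, hlam0, fun z => hA z, ?_⟩
    have hzero : lam * (w₀ ⬝ᵥ w₀ - 1) = 0 := by rw [hbd]; ring
    exact wrapup H hH b c lam w₀ hgv0 hA hzero hq0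

lemma quad_form {n : ℕ} (A : Matrix (Fin n) (Fin n) ℝ) (bv : Fin n → ℝ) (dc : ℝ)
    (x : (Fin n ⊕ Unit) → ℝ) :
    x ⬝ᵥ (Matrix.fromBlocks A (Matrix.of fun i (_ : Unit) => bv i)
      (Matrix.of fun (_ : Unit) j => bv j) (Matrix.of fun (_ : Unit) (_ : Unit) => dc)).mulVec x
    = (fun i => x (Sum.inl i)) ⬝ᵥ A.mulVec (fun i => x (Sum.inl i))
      + 2 * (x (Sum.inr ())) * (bv ⬝ᵥ fun i => x (Sum.inl i))
      + dc * (x (Sum.inr ())) ^ 2 := by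
  simp only [dotProduct, Matrix.mulVec, Fintype.sum_sum_type, Finset.univ_unique,
    Finset.sum_singleton, Matrix.fromBlocks_apply₁₁, Matrix.fromBlocks_apply₁₂,
    Matrix.fromBlocks_apply₂₁, Matrix.fromBlocks_apply₂₂, Matrix.of_apply,
    Finset.mul_sum, Finset.sum_mul, mul_add, add_mul, Finset.sum_add_distrib]
  have h1 : ∑ i : Fin n, x (Sum.inl i) * (bv i * x (Sum.inr default))
      = ∑ i : Fin n, x (Sum.inr default) * (bv i * x (Sum.inl i)) :=
    Finset.sum_congr rfl fun i _ => by ring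
  have h2 : ∑ i : Fin n, 2 * x (Sum.inr ()) * (bv i * x (Sum.inl i))
      = ∑ i : Fin n, x (Sum.inr default) * (bv i * x (Sum.inl i))
        + ∑ i : Fin n, x (Sum.inr default) * (bv i * x (Sum.inl i)) := by
    rw [← Finset.sum_add_distrib]
    exact Finset.sum_congr rfl fun i _ => by ring
  rw [h1, h2]
  ring

lemma herm_block {n : ℕ} (A : Matrix (Fin n) (Fin n) ℝ) (hA : A.IsSymm) (bv : Fin n → ℝ)
    (dc : ℝ) :
    (Matrix.fromBlocks A (Matrix.of fun i (_ : Unit) => bv i)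
      (Matrix.of fun (_ : Unit) j => bv j)
      (Matrix.of fun (_ : Unit) (_ : Unit) => dc)).IsHermitian := by
  unfold Matrix.IsHermitian
  ext i j
  rcases i with i | i <;> rcases j with j | j <;>
    simp [Matrix.conjTranspose_apply, Matrix.fromBlocks]
  have := congrFun (congrFun hA j) i
  rw [Matrix.transpose_apply] at this
  exact this.symm

set_option maxHeartbeats 1000000

/-- Equivalence of the semi-infinite robust CBF-QP constraint with the SDP feasibility
conditions: `u` satisfies `(zᵀC̃ + d̃ᵀ)u ≤ zᵀH̃z + f̃ᵀz + g̃` for all `‖z‖₂ ≤ 1` iff there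
exist `λ ≥ 0` and `t = ‖u‖₂²` such that
`[[H̃ + λI, (1/2)(f̃ − C̃u)], [(1/2)(f̃ − C̃u)ᵀ, g̃ − d̃ᵀu − λ]] ⪰ 0` and
`[[Iₘ, u], [uᵀ, t]] ⪰ 0`. -/
theorem robust_qp_iff_sdp (p m : ℕ) (H : Matrix (Fin p) (Fin p) ℝ) (hH : H.IsSymm)
    (C : Matrix (Fin p) (Fin m) ℝ) (d : Fin m → ℝ) (f : Fin p → ℝ) (g : ℝ)
    (u : EuclideanSpace ℝ (Fin m)) :
    (∀ z : EuclideanSpace ℝ (Fin p), ‖z‖ ≤ 1 →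
        dotProduct z (C.mulVec u) + dotProduct d u ≤
          dotProduct z (H.mulVec z) + dotProduct f z + g) ↔
      ∃ lam t : ℝ, t = ‖u‖ ^ 2 ∧ 0 ≤ lam ∧
        (Matrix.fromBlocks (H + lam • (1 : Matrix (Fin p) (Fin p) ℝ))
          (Matrix.of fun i (_ : Unit) => (1 / 2 : ℝ) * (f - C.mulVec u) i)
          (Matrix.of fun (_ : Unit) j => (1 / 2 : ℝ) * (f - C.mulVec u) j)
          (Matrix.of fun (_ : Unit) (_ : Unit) =>
            g - dotProduct d u - lam)).PosSemidef ∧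
        (Matrix.fromBlocks (1 : Matrix (Fin m) (Fin m) ℝ)
          (Matrix.of fun i (_ : Unit) => u i)
          (Matrix.of fun (_ : Unit) j => u j)
          (Matrix.of fun (_ : Unit) (_ : Unit) => t)).PosSemidef := by
  have hmn : ∀ z : EuclideanSpace ℝ (Fin p),
      (dotProduct z (C.mulVec u) + dotProduct d u ≤
        dotProduct z (H.mulVec z) + dotProduct f z + g) ↔
      (0 ≤ z ⬝ᵥ H.mulVec z + (f - C.mulVec u) ⬝ᵥ z + (g - d ⬝ᵥ u)) := by
    intro z
    rw [sub_dotProduct]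
    have hc := dotProduct_comm (C.mulVec u) z
    constructor <;> intro h <;> linarith [hc]
  constructor
  · intro hsem
    obtain ⟨lam, hlam, hc2, hc3⟩ := sproc p H hH (f - C.mulVec u) (g - d ⬝ᵥ u)
      (fun z hz => (hmn z).mp (hsem z hz))
    refine ⟨lam, ‖u‖ ^ 2, rfl, hlam, Matrix.posSemidef_iff_dotProduct_mulVec.mpr ⟨herm_block _ ?_ _ _, fun x => ?_⟩,
      Matrix.posSemidef_iff_dotProduct_mulVec.mpr ⟨herm_block _ ?_ _ _, fun x => ?_⟩⟩
    · unfold Matrix.IsSymm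
      rw [Matrix.transpose_add, Matrix.transpose_smul, Matrix.transpose_one, hH.eq]
    · rw [show star x = x from star_trivial x, quad_form]
      set z : Fin p → ℝ := fun i => x (Sum.inl i) with hz
      set s : ℝ := x (Sum.inr ()) with hs
      have hav : z ⬝ᵥ (H + lam • (1 : Matrix (Fin p) (Fin p) ℝ)).mulVec z
          = z ⬝ᵥ H.mulVec z + lam * (z ⬝ᵥ z) := by
        rw [Matrix.add_mulVec, dotProduct_add, Matrix.smul_mulVec,
          Matrix.one_mulVec, dotProduct_smul, smul_eq_mul]
      have hbv : (fun i => (1/2 : ℝ) * (f - C.mulVec u) i) ⬝ᵥ z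
          = (1/2) * ((f - C.mulVec u) ⬝ᵥ z) := by
        simp [dotProduct, Finset.mul_sum, mul_assoc]
      rw [hav, hbv]
      by_cases hs0 : s = 0
      · have := hc2 z
        rw [hs0]
        ring_nf
        ring_nf at this
        linarith [this]
      · have h3 := hc3 (s⁻¹ • z)
        rw [dotH_smul, dot_smul', dotb_smul] at h3
        have heq : s ^ 2 * ((s⁻¹) ^ 2 * (z ⬝ᵥ H.mulVec z)
              + s⁻¹ * ((f - C.mulVec u) ⬝ᵥ z) + (g - d ⬝ᵥ u)
              + lam * ((s⁻¹) ^ 2 * (z ⬝ᵥ z) - 1))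
            = z ⬝ᵥ H.mulVec z + lam * (z ⬝ᵥ z)
              + 2 * s * (1/2 * ((f - C.mulVec u) ⬝ᵥ z))
              + (g - dotProduct d u - lam) * s ^ 2 := by
          field_simp
          ring
        have h4 := mul_nonneg (sq_nonneg s) h3
        rw [heq] at h4
        linarith [h4]
    · unfold Matrix.IsSymm
      rw [Matrix.transpose_one]
    · rw [show star x = x from star_trivial x, quad_form]
      set z : Fin m → ℝ := fun i => x (Sum.inl i) with hz
      set s : ℝ := x (Sum.inr ()) with hs
      rw [Matrix.one_mulVec]
      have hnu : ‖u‖ ^ 2 = u ⬝ᵥ u := norm_sq_dot u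
      have hself := dot_self_nonneg' (z + s • (fun i => u i : Fin m → ℝ))
      rw [dot_expand] at hself
      rw [hnu]
      have hcu : u ⬝ᵥ z = z ⬝ᵥ u := dotProduct_comm u z
      nlinarith [hself, hcu]
  · rintro ⟨lam, t, ht, hlam, hP, _⟩ z hz
    obtain ⟨_, hq1⟩ := Matrix.posSemidef_iff_dotProduct_mulVec.mp hP
    apply (hmn z).mpr
    have h := hq1 (Sum.elim z (fun _ : Unit => (1:ℝ)))
    rw [show star (Sum.elim z (fun _ : Unit => (1:ℝ))) = _ from star_trivial _,
      quad_form] at h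
    simp only [Sum.elim_inl, Sum.elim_inr] at h
    have hav : z ⬝ᵥ (H + lam • (1 : Matrix (Fin p) (Fin p) ℝ)).mulVec z
        = z ⬝ᵥ H.mulVec z + lam * (z ⬝ᵥ z) := by
      rw [Matrix.add_mulVec, dotProduct_add, Matrix.smul_mulVec,
        Matrix.one_mulVec, dotProduct_smul, smul_eq_mul]
    have hbv : (fun i => (1/2 : ℝ) * (f - C.mulVec u) i) ⬝ᵥ z
        = (1/2) * ((f - C.mulVec u) ⬝ᵥ z) := by
      simp [dotProduct, Finset.mul_sum, mul_assoc]
    rw [hav, hbv] at h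
    have hzz : z ⬝ᵥ z ≤ 1 := (norm_le_iff_dot z).1 hz
    nlinarith [h, hlam, hzz]
end
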